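/- Let n ≥ 2, let A^{(1)},…,A^{(m)} ∈ ℝ^{n×n×n} be symmetric third-order tensors, and define f(Q) := Σ_{ℓ=1}^m Σ_{j=1}^n (W^{(ℓ)}_{jjj}(Q))², where W^{(ℓ)}_{abc}(Q) = Σ_{p,q,r} A^{(ℓ)}_{pqr} Q_{pa} Q_{qb} Q_{rc}. Let ε > 0, let Q ∈ SO(n), let 1 ≤ i < j ≤ n satisfy |⟨ProjGrad f(Q), Q δ_{i,j}⟩| ≥ ε ‖ProjGrad f(Q)‖, let θ* ∈ [−π/4, π/4] be a global maximizer over ℝ of θ ↦ f(Q G(i,j,θ)), and set Q' := Q G(i,j,θ*). Then |f(Q') − f(Q)| ≥ (√2 ε / 4) · ‖ProjGrad f(Q)‖ · ‖Q' − Q‖. -/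

import Mathlib

open Matrix Real Filter Set

attribute [local instance] Matrix.frobeniusNormedAddCommGroup Matrix.frobeniusNormedSpace

noncomputable def frobInner {n : ℕ} (A B : Matrix (Fin n) (Fin n) ℝ) : ℝ :=
  ∑ i, ∑ j, A i j * B i j

noncomputable def frobNorm {n : ℕ} (A : Matrix (Fin n) (Fin n) ℝ) : ℝ :=
  Real.sqrt (∑ i, ∑ j, (A i j) ^ 2)

def SOn (n : ℕ) : Set (Matrix (Fin n) (Fin n) ℝ) := {Q | Qᵀ * Q = 1 ∧ Q.det = 1}

noncomputable def grad {n : ℕ} (f : Matrix (Fin n) (Fin n) ℝ → ℝ)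
    (Q : Matrix (Fin n) (Fin n) ℝ) : Matrix (Fin n) (Fin n) ℝ :=
  Matrix.of fun k l => fderiv ℝ f Q (Matrix.single k l 1)

noncomputable def Lam {n : ℕ} (f : Matrix (Fin n) (Fin n) ℝ → ℝ)
    (Q : Matrix (Fin n) (Fin n) ℝ) : Matrix (Fin n) (Fin n) ℝ :=
  (1 / 2 : ℝ) • (Qᵀ * grad f Q - (grad f Q)ᵀ * Q)

noncomputable def projGrad {n : ℕ} (f : Matrix (Fin n) (Fin n) ℝ → ℝ)
    (Q : Matrix (Fin n) (Fin n) ℝ) : Matrix (Fin n) (Fin n) ℝ := Q * Lam f Q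

noncomputable def givens {n : ℕ} (i j : Fin n) (θ : ℝ) : Matrix (Fin n) (Fin n) ℝ :=
  Matrix.of fun k l =>
    if k = i ∧ l = i then Real.cos θ
    else if k = j ∧ l = j then Real.cos θ
    else if k = j ∧ l = i then Real.sin θ
    else if k = i ∧ l = j then -Real.sin θ
    else if k = l then 1 else 0

def deltaMat {n : ℕ} (i j : Fin n) : Matrix (Fin n) (Fin n) ℝ :=
  Matrix.of fun k l => if k = j ∧ l = i then 1 else if k = i ∧ l = j then -1 else 0

/-!
Along the path `t ↦ Q * givens i j t` only the columns `i` and `j` of `Q` move, by a plane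
rotation, and the squared diagonal entries of a symmetric cubic form summed over these two columns
form a trigonometric polynomial `K + α cos 4t + β sin 4t`; so does `f` along the path. At a global
maximizer `θ` this forces `(α, β) = r (cos 4θ, sin 4θ)` with `r ≥ 0`, hence
`f Q' - f Q = r (1 - cos 4θ)`, while the derivative at `t = 0` is
`4β = ⟨ProjGrad f(Q), Q δ_{i,j}⟩` and `‖Q' - Q‖ = √8 |sin (θ/2)|`. What remains is the elementary
inequality `4 |sin 4θ| |sin (θ/2)| ≤ 1 - cos 4θ` for `|θ| ≤ π/4`.
-/

section Frobenius
variable {n : ℕ}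

lemma frobInner_eq_trace (A B : Matrix (Fin n) (Fin n) ℝ) : frobInner A B = (Aᵀ * B).trace := by
  simp only [frobInner, Matrix.trace, Matrix.diag, Matrix.mul_apply, Matrix.transpose_apply]
  exact Finset.sum_comm

lemma frobInner_mul_eq_transpose_mul (Q A B : Matrix (Fin n) (Fin n) ℝ) :
    frobInner A (Q * B) = frobInner (Qᵀ * A) B := by
  rw [frobInner_eq_trace, frobInner_eq_trace, Matrix.transpose_mul, Matrix.transpose_transpose,
    Matrix.mul_assoc]

lemma frobInner_mul_mul_of_orthogonal {Q : Matrix (Fin n) (Fin n) ℝ} (hQ : Qᵀ * Q = 1)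
    (A B : Matrix (Fin n) (Fin n) ℝ) : frobInner (Q * A) (Q * B) = frobInner A B := by
  rw [frobInner_mul_eq_transpose_mul, ← Matrix.mul_assoc, hQ, Matrix.one_mul]

lemma frobNorm_eq_sqrt_frobInner (A : Matrix (Fin n) (Fin n) ℝ) :
    frobNorm A = √(frobInner A A) := by
  simp only [frobNorm, frobInner, sq]

lemma frobNorm_mul_of_orthogonal {Q : Matrix (Fin n) (Fin n) ℝ} (hQ : Qᵀ * Q = 1)
    (A : Matrix (Fin n) (Fin n) ℝ) : frobNorm (Q * A) = frobNorm A := by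
  rw [frobNorm_eq_sqrt_frobInner, frobNorm_eq_sqrt_frobInner, frobInner_mul_mul_of_orthogonal hQ]

lemma frobInner_deltaMat {i j : Fin n} (hij : i ≠ j) (A : Matrix (Fin n) (Fin n) ℝ) :
    frobInner A (deltaMat i j) = A j i - A i j := by
  rw [frobInner, Fintype.sum_eq_add j i hij.symm, Fintype.sum_eq_single i, Fintype.sum_eq_single j]
  all_goals intros; simp_all [deltaMat, sub_eq_add_neg]

end Frobenius

section Givens
variable {n : ℕ} {i j : Fin n}

lemma transpose_mul_givens_apply_left (hij : i ≠ j) (Q : Matrix (Fin n) (Fin n) ℝ) (t : ℝ) :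
    (Q * givens i j t)ᵀ i = cos t • Qᵀ i + sin t • Qᵀ j := by
  ext p
  rw [Matrix.transpose_apply, Matrix.mul_apply, Fintype.sum_eq_add i j hij]
  · simp [givens, hij, hij.symm]; ring
  · intro q hq; simp [givens, hq.1, hq.2]

lemma transpose_mul_givens_apply_right (hij : i ≠ j) (Q : Matrix (Fin n) (Fin n) ℝ) (t : ℝ) :
    (Q * givens i j t)ᵀ j = -sin t • Qᵀ i + cos t • Qᵀ j := by
  ext p
  rw [Matrix.transpose_apply, Matrix.mul_apply, Fintype.sum_eq_add i j hij]
  · simp [givens, hij, hij.symm]; ring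
  · intro q hq; simp [givens, hq.1, hq.2]

lemma transpose_mul_givens_apply_of_ne {k : Fin n} (hki : k ≠ i) (hkj : k ≠ j)
    (Q : Matrix (Fin n) (Fin n) ℝ) (t : ℝ) : (Q * givens i j t)ᵀ k = Qᵀ k := by
  ext p
  rw [Matrix.transpose_apply, Matrix.mul_apply, Fintype.sum_eq_single k]
  · simp [givens, hki, hkj]
  · intro q hq; simp [givens, hki, hkj, hq]

lemma frobNorm_givens_sub_one (hij : i ≠ j) (t : ℝ) :
    frobNorm (givens i j t - 1) = √8 * |sin (t / 2)| := by
  have hsq : ∑ k, ∑ l, ((givens i j t - 1) k l) ^ 2 = 8 * ((1 - cos t) / 2) := by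
    rw [Fintype.sum_eq_add i j hij, Fintype.sum_eq_add i j hij, Fintype.sum_eq_add i j hij]
    · simp [givens, hij, hij.symm]
      linear_combination 2 * sin_sq_add_cos_sq t
    all_goals intros; simp_all [givens, Matrix.one_apply]
  rw [frobNorm, hsq, abs_sin_half, Real.sqrt_mul (by norm_num)]

lemma givens_eq_cos_smul_add_sin_smul (hij : i ≠ j) (t : ℝ) :
    givens i j t = cos t • (Matrix.single i i 1 + Matrix.single j j 1) + sin t • deltaMat i j
      + (1 - (Matrix.single i i 1 + Matrix.single j j 1)) := by
  ext k l
  simp only [givens, deltaMat, Matrix.add_apply, Matrix.smul_apply, Matrix.sub_apply,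
    Matrix.one_apply, Matrix.single_apply, Matrix.of_apply, smul_eq_mul]
  split_ifs <;> grind

lemma givens_zero (hij : i ≠ j) : givens i j 0 = 1 := by
  simpa using givens_eq_cos_smul_add_sin_smul hij 0

lemma hasDerivAt_givens (hij : i ≠ j) : HasDerivAt (givens i j) (deltaMat i j) 0 := by
  have h := (((hasDerivAt_cos 0).smul_const (Matrix.single i i (1 : ℝ) + Matrix.single j j 1)).add
    ((hasDerivAt_sin 0).smul_const (deltaMat i j))).add_const
      (1 - (Matrix.single i i (1 : ℝ) + Matrix.single j j 1))
  simp only [sin_zero, neg_zero, zero_smul, cos_zero, one_smul, zero_add] at h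
  rwa [funext (givens_eq_cos_smul_add_sin_smul hij)]

lemma hasDerivAt_mul_givens (hij : i ≠ j) (Q : Matrix (Fin n) (Fin n) ℝ) :
    HasDerivAt (fun t => Q * givens i j t) (Q * deltaMat i j) 0 :=
  (LinearMap.mulLeft ℝ Q).toContinuousLinearMap.hasFDerivAt.comp_hasDerivAt 0
    (hasDerivAt_givens hij)

end Givens

section Gradient
variable {n : ℕ}

lemma fderiv_apply_eq_frobInner_grad (f : Matrix (Fin n) (Fin n) ℝ → ℝ)
    (Q M : Matrix (Fin n) (Fin n) ℝ) : fderiv ℝ f Q M = frobInner (grad f Q) M := by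
  conv_lhs => rw [Matrix.matrix_eq_sum_single M]
  simp only [map_sum, frobInner, grad, Matrix.of_apply]
  refine Finset.sum_congr rfl fun k _ => Finset.sum_congr rfl fun l _ => ?_
  rw [show Matrix.single k l (M k l) = M k l • Matrix.single k l 1 by
    rw [Matrix.smul_single, smul_eq_mul, mul_one], map_smul, smul_eq_mul, mul_comm]

lemma frobInner_projGrad_mul_deltaMat {i j : Fin n} (hij : i ≠ j)
    (f : Matrix (Fin n) (Fin n) ℝ → ℝ) {Q : Matrix (Fin n) (Fin n) ℝ} (hQ : Qᵀ * Q = 1) :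
    frobInner (projGrad f Q) (Q * deltaMat i j) = frobInner (grad f Q) (Q * deltaMat i j) := by
  have hskew : (grad f Q)ᵀ * Q = (Qᵀ * grad f Q)ᵀ := by
    rw [Matrix.transpose_mul, Matrix.transpose_transpose]
  rw [projGrad, frobInner_mul_mul_of_orthogonal hQ, frobInner_mul_eq_transpose_mul,
    frobInner_deltaMat hij, frobInner_deltaMat hij, Lam, hskew]
  simp only [Matrix.smul_apply, Matrix.sub_apply, Matrix.transpose_apply, smul_eq_mul]
  ring

lemma hasDerivAt_comp_mul_givens {f : Matrix (Fin n) (Fin n) ℝ → ℝ} {Q : Matrix (Fin n) (Fin n) ℝ}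
    (hf : DifferentiableAt ℝ f Q) (hQ : Qᵀ * Q = 1) {i j : Fin n} (hij : i ≠ j) :
    HasDerivAt (fun t => f (Q * givens i j t)) (frobInner (projGrad f Q) (Q * deltaMat i j)) 0 := by
  rw [frobInner_projGrad_mul_deltaMat hij f hQ, ← fderiv_apply_eq_frobInner_grad]
  have hf' : HasFDerivAt f (fderiv ℝ f Q) (Q * givens i j 0) := by
    rw [givens_zero hij, Matrix.mul_one]; exact hf.hasFDerivAt
  exact hf'.comp_hasDerivAt 0 (hasDerivAt_mul_givens hij Q)

end Gradient

lemma mul_cos_le_sin {x : ℝ} (hx₀ : 0 ≤ x) (hx : x ≤ π) : x * cos x ≤ sin x := by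
  have hπ : 1 / 6 ≤ 2 / π ^ 2 := by
    rw [div_le_div_iff₀ (by norm_num) (by positivity)]; nlinarith [pi_lt_d2, pi_pos]
  calc x * cos x ≤ x * (1 - 2 / π ^ 2 * x ^ 2) :=
        mul_le_mul_of_nonneg_left (cos_le_one_sub_mul_cos_sq (abs_le.2 ⟨by linarith, hx⟩)) hx₀
    _ ≤ x - x ^ 3 / 6 := by nlinarith [mul_le_mul_of_nonneg_left hπ (pow_nonneg hx₀ 3)]
    _ ≤ sin x := sin_ge_sub_cube hx₀

lemma abs_sin_four_mul_mul_abs_sin_half_le {θ : ℝ} (hθ : |θ| ≤ π / 4) :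
    4 * |sin (4 * θ)| * |sin (θ / 2)| ≤ 1 - cos (4 * θ) := by
  have h4 : 4 * θ = 2 * (2 * θ) := by ring
  have hc : 0 ≤ cos (2 * θ) := cos_nonneg_of_mem_Icc (abs_le.1 (by rw [abs_mul, abs_two]; linarith))
  have hx : |2 * θ| * cos (2 * θ) ≤ |sin (2 * θ)| := by
    have := mul_cos_le_sin (abs_nonneg (2 * θ)) (by rw [abs_mul, abs_two]; linarith [pi_pos])
    rw [cos_abs] at this
    rcases abs_choice (2 * θ) with h | h <;> rw [h] at this ⊢
    · exact this.trans (le_abs_self _)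
    · rw [sin_neg] at this; exact this.trans (neg_le_abs _)
  have hhalf : 4 * cos (2 * θ) * |sin (θ / 2)| ≤ |sin (2 * θ)| := calc
    _ ≤ 4 * cos (2 * θ) * (|θ| / 2) := by
        gcongr; simpa [abs_div] using abs_sin_le_abs (x := θ / 2)
    _ = |2 * θ| * cos (2 * θ) := by rw [abs_mul, abs_two]; ring
    _ ≤ |sin (2 * θ)| := hx
  calc 4 * |sin (4 * θ)| * |sin (θ / 2)|
      = 2 * |sin (2 * θ)| * (4 * cos (2 * θ) * |sin (θ / 2)|) := by
        rw [h4, sin_two_mul, abs_mul, abs_mul, abs_of_nonneg hc, abs_two]; ring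
    _ ≤ 2 * |sin (2 * θ)| * |sin (2 * θ)| := by gcongr
    _ = 1 - cos (4 * θ) := by
        rw [h4, cos_two_mul, mul_assoc, abs_mul_abs_self]; linarith [sin_sq_add_cos_sq (2 * θ)]

lemma nonneg_and_eq_zero_of_forall_cos_sin_le {r s : ℝ} (h : ∀ y, r * cos y + s * sin y ≤ r) :
    0 ≤ r ∧ s = 0 := by
  refine ⟨by simpa using h π, ?_⟩
  have hmax : IsLocalMax (fun y => r * cos y + s * sin y) 0 :=
    Filter.Eventually.of_forall fun y => by simpa using h y
  have hd : HasDerivAt (fun y => r * cos y + s * sin y) s 0 := by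
    simpa using ((hasDerivAt_cos 0).const_mul r).fun_add ((hasDerivAt_sin 0).const_mul s)
  exact hmax.hasDerivAt_eq_zero hd

def IsFourthHarmonic (φ : ℝ → ℝ) : Prop :=
  ∃ K α β : ℝ, ∀ t, φ t = K + α * cos (4 * t) + β * sin (4 * t)

namespace IsFourthHarmonic

lemma const (K : ℝ) : IsFourthHarmonic fun _ => K := ⟨K, 0, 0, fun t => by ring⟩

lemma add {φ ψ : ℝ → ℝ} (hφ : IsFourthHarmonic φ) (hψ : IsFourthHarmonic ψ) :
    IsFourthHarmonic (φ + ψ) := by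
  obtain ⟨K, α, β, hφ⟩ := hφ
  obtain ⟨K', α', β', hψ⟩ := hψ
  exact ⟨K + K', α + α', β + β', fun t => by simp only [Pi.add_apply, hφ, hψ]; ring⟩

lemma sum {ι : Type*} (s : Finset ι) {φ : ι → ℝ → ℝ} (hφ : ∀ k ∈ s, IsFourthHarmonic (φ k)) :
    IsFourthHarmonic fun t => ∑ k ∈ s, φ k t := by
  classical
  induction s using Finset.induction_on with
  | empty => simpa using const 0
  | insert a s ha ih =>
    simp only [Finset.sum_insert ha]
    exact (hφ a (Finset.mem_insert_self a s)).add
      (ih fun k hk => hφ k (Finset.mem_insert_of_mem hk))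

lemma abs_deriv_mul_abs_sin_half_le {φ : ℝ → ℝ} (hφ : IsFourthHarmonic φ) {θ d : ℝ}
    (hmax : ∀ t, φ t ≤ φ θ) (hθ : |θ| ≤ π / 4) (hd : HasDerivAt φ d 0) :
    |d| * |sin (θ / 2)| ≤ φ θ - φ 0 := by
  obtain ⟨K, α, β, hφ⟩ := hφ
  -- `(r, s)` are the coordinates of `(α, β)` in the frame `(cos 4θ, sin 4θ)`, `(-sin 4θ, cos 4θ)`.
  set r := α * cos (4 * θ) + β * sin (4 * θ)
  set s := β * cos (4 * θ) - α * sin (4 * θ)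
  have hshift : ∀ y, φ (θ + y / 4) = K + r * cos y + s * sin y := fun y => by
    rw [hφ, show 4 * (θ + y / 4) = 4 * θ + y by ring, cos_add, sin_add]; ring
  obtain ⟨hr, hs⟩ : 0 ≤ r ∧ s = 0 := nonneg_and_eq_zero_of_forall_cos_sin_le fun y => by
    have := hmax (θ + y / 4)
    rw [hshift, hφ θ] at this
    linarith
  have hpyth := sin_sq_add_cos_sq (4 * θ)
  have hα : α = r * cos (4 * θ) := by linear_combination (-α) * hpyth - sin (4 * θ) * hs
  have hβ : β = r * sin (4 * θ) := by linear_combination (-β) * hpyth + cos (4 * θ) * hs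
  have hd' : d = 4 * β := by
    have h4 : HasDerivAt (fun t : ℝ => 4 * t) 4 0 := by
      simpa using (hasDerivAt_id (0 : ℝ)).const_mul (4 : ℝ)
    refine hd.unique ?_
    rw [funext hφ]
    simpa [mul_comm] using ((((hasDerivAt_cos _).comp 0 h4).const_mul α).const_add K).fun_add
      (((hasDerivAt_sin _).comp 0 h4).const_mul β)
  have hdiff : φ θ - φ 0 = r * (1 - cos (4 * θ)) := by
    rw [hφ, hφ]
    simp only [mul_zero, cos_zero, sin_zero]
    linear_combination cos (4 * θ) * hα + sin (4 * θ) * hβ - hα + r * hpyth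
  calc |d| * |sin (θ / 2)| = r * (4 * |sin (4 * θ)| * |sin (θ / 2)|) := by
        rw [hd', hβ, abs_mul, abs_mul, abs_of_nonneg hr, abs_of_pos four_pos]; ring
    _ ≤ r * (1 - cos (4 * θ)) :=
        mul_le_mul_of_nonneg_left (abs_sin_four_mul_mul_abs_sin_half_le hθ) hr
    _ = φ θ - φ 0 := hdiff.symm

end IsFourthHarmonic

-- The two quantities are `p(c, s)` and `p(-s, c)` for one binary cubic `p`; squaring turns `p`
-- into a sextic with harmonics `0, 2, 4, 6` in `t`, and the quarter turn flips the sign of the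
-- harmonics `2` and `6`, so only the harmonics `0` and `4` survive in the sum.
lemma isFourthHarmonic_cubic_sq_add_sq (a b d e : ℝ) :
    IsFourthHarmonic fun t =>
      (a * cos t ^ 3 + 3 * b * cos t ^ 2 * sin t + 3 * d * cos t * sin t ^ 2 + e * sin t ^ 3) ^ 2 +
        (e * cos t ^ 3 - 3 * d * cos t ^ 2 * sin t + 3 * b * cos t * sin t ^ 2
          - a * sin t ^ 3) ^ 2 := by
  set K := ((3 * a + 3 * d) ^ 2 + (3 * b + 3 * e) ^ 2 + (a - 3 * d) ^ 2 + (3 * b - e) ^ 2) / 16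
  set α := ((3 * a + 3 * d) * (a - 3 * d) - (3 * b + 3 * e) * (3 * b - e)) / 8
  set β := ((3 * a + 3 * d) * (3 * b - e) + (3 * b + 3 * e) * (a - 3 * d)) / 8
  refine ⟨K, α, β, fun t => ?_⟩
  have h4 : 4 * t = 2 * (2 * t) := by ring
  rw [h4, cos_two_mul' (2 * t), sin_two_mul (2 * t), cos_two_mul', sin_two_mul]
  set c := cos t
  set s := sin t
  have hcs : c ^ 2 + s ^ 2 - 1 = 0 := by rw [cos_sq_add_sin_sq, sub_self]
  linear_combination (K * ((c ^ 2 + s ^ 2) ^ 2 + (c ^ 2 + s ^ 2) + 1)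
    + α * ((c ^ 2 - s ^ 2) ^ 2 - (2 * s * c) ^ 2) + β * (2 * (2 * s * c) * (c ^ 2 - s ^ 2))) * hcs

section Tensor
variable {ι : Type*} [Fintype ι] {B : ι → ι → ι → ℝ}

def tensorApply (B : ι → ι → ι → ℝ) (u v w : ι → ℝ) : ℝ :=
  ∑ p, ∑ q, ∑ r, B p q r * u p * v q * w r

lemma tensorApply_add_left (x y : ℝ) (u u' v w : ι → ℝ) :
    tensorApply B (x • u + y • u') v w = x * tensorApply B u v w + y * tensorApply B u' v w := by
  simp only [tensorApply, Finset.mul_sum, ← Finset.sum_add_distrib, Pi.add_apply, Pi.smul_apply,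
    smul_eq_mul]
  exact Finset.sum_congr rfl fun _ _ => Finset.sum_congr rfl fun _ _ =>
    Finset.sum_congr rfl fun _ _ => by ring

lemma tensorApply_add_middle (x y : ℝ) (u v v' w : ι → ℝ) :
    tensorApply B u (x • v + y • v') w = x * tensorApply B u v w + y * tensorApply B u v' w := by
  simp only [tensorApply, Finset.mul_sum, ← Finset.sum_add_distrib, Pi.add_apply, Pi.smul_apply,
    smul_eq_mul]
  exact Finset.sum_congr rfl fun _ _ => Finset.sum_congr rfl fun _ _ =>
    Finset.sum_congr rfl fun _ _ => by ring

lemma tensorApply_add_right (x y : ℝ) (u v w w' : ι → ℝ) :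
    tensorApply B u v (x • w + y • w') = x * tensorApply B u v w + y * tensorApply B u v w' := by
  simp only [tensorApply, Finset.mul_sum, ← Finset.sum_add_distrib, Pi.add_apply, Pi.smul_apply,
    smul_eq_mul]
  exact Finset.sum_congr rfl fun _ _ => Finset.sum_congr rfl fun _ _ =>
    Finset.sum_congr rfl fun _ _ => by ring

lemma tensorApply_swap_left (hB : ∀ p q r, B p q r = B q p r) (u v w : ι → ℝ) :
    tensorApply B u v w = tensorApply B v u w := by
  rw [tensorApply, Finset.sum_comm]
  exact Finset.sum_congr rfl fun _ _ => Finset.sum_congr rfl fun _ _ =>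
    Finset.sum_congr rfl fun _ _ => by rw [hB]; ring

lemma tensorApply_swap_right (hB : ∀ p q r, B p q r = B p r q) (u v w : ι → ℝ) :
    tensorApply B u v w = tensorApply B u w v := by
  refine Finset.sum_congr rfl fun _ _ => ?_
  rw [Finset.sum_comm]
  exact Finset.sum_congr rfl fun _ _ => Finset.sum_congr rfl fun _ _ => by rw [hB]; ring

lemma tensorApply_cube_add (hB₁ : ∀ p q r, B p q r = B q p r) (hB₂ : ∀ p q r, B p q r = B p r q)
    (x y : ℝ) (u v : ι → ℝ) :
    tensorApply B (x • u + y • v) (x • u + y • v) (x • u + y • v) =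
      tensorApply B u u u * x ^ 3 + 3 * tensorApply B u u v * x ^ 2 * y
        + 3 * tensorApply B u v v * x * y ^ 2 + tensorApply B v v v * y ^ 3 := by
  have huvu : tensorApply B u v u = tensorApply B u u v := tensorApply_swap_right hB₂ ..
  have hvuu : tensorApply B v u u = tensorApply B u u v := by
    rw [tensorApply_swap_left hB₁, tensorApply_swap_right hB₂]
  have hvuv : tensorApply B v u v = tensorApply B u v v := tensorApply_swap_left hB₁ ..
  have hvvu : tensorApply B v v u = tensorApply B u v v := by
    rw [tensorApply_swap_right hB₂, tensorApply_swap_left hB₁]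
  simp only [tensorApply_add_left, tensorApply_add_middle, tensorApply_add_right, huvu, hvuu,
    hvuv, hvvu]
  ring

lemma isFourthHarmonic_tensorApply_rotation (hB₁ : ∀ p q r, B p q r = B q p r)
    (hB₂ : ∀ p q r, B p q r = B p r q) (u v : ι → ℝ) :
    IsFourthHarmonic fun t =>
      tensorApply B (cos t • u + sin t • v) (cos t • u + sin t • v) (cos t • u + sin t • v) ^ 2
      + tensorApply B (-sin t • u + cos t • v) (-sin t • u + cos t • v)
          (-sin t • u + cos t • v) ^ 2 := by
  obtain ⟨K, α, β, h⟩ := isFourthHarmonic_cubic_sq_add_sq (tensorApply B u u u)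
    (tensorApply B u u v) (tensorApply B u v v) (tensorApply B v v v)
  refine ⟨K, α, β, fun t => ?_⟩
  dsimp only at h ⊢
  rw [tensorApply_cube_add hB₁ hB₂, tensorApply_cube_add hB₁ hB₂, ← h]
  ring

end Tensor

lemma isFourthHarmonic_comp_mul_givens {n m : ℕ} {A : Fin m → Fin n → Fin n → Fin n → ℝ}
    (hA₁ : ∀ ℓ p q r, A ℓ p q r = A ℓ q p r) (hA₂ : ∀ ℓ p q r, A ℓ p q r = A ℓ p r q)
    {f : Matrix (Fin n) (Fin n) ℝ → ℝ}
    (hf : ∀ Q, f Q = ∑ ℓ, ∑ k, tensorApply (A ℓ) (Qᵀ k) (Qᵀ k) (Qᵀ k) ^ 2)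
    {i j : Fin n} (hij : i ≠ j) (Q : Matrix (Fin n) (Fin n) ℝ) :
    IsFourthHarmonic fun t => f (Q * givens i j t) := by
  simp only [hf]
  refine IsFourthHarmonic.sum _ fun ℓ _ => ?_
  have hsplit (F : Fin n → ℝ) : ∑ k, F k = ∑ k ∈ Finset.univ \ {i, j}, F k + (F i + F j) := by
    rw [← Finset.sum_pair hij, Finset.sum_sdiff (Finset.subset_univ _)]
  have hcols : (fun t => ∑ k, tensorApply (A ℓ) ((Q * givens i j t)ᵀ k) ((Q * givens i j t)ᵀ k)
        ((Q * givens i j t)ᵀ k) ^ 2) =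
      (fun _ => ∑ k ∈ Finset.univ \ {i, j}, tensorApply (A ℓ) (Qᵀ k) (Qᵀ k) (Qᵀ k) ^ 2) +
      fun t => tensorApply (A ℓ) (cos t • Qᵀ i + sin t • Qᵀ j) (cos t • Qᵀ i + sin t • Qᵀ j)
          (cos t • Qᵀ i + sin t • Qᵀ j) ^ 2
        + tensorApply (A ℓ) (-sin t • Qᵀ i + cos t • Qᵀ j) (-sin t • Qᵀ i + cos t • Qᵀ j)
          (-sin t • Qᵀ i + cos t • Qᵀ j) ^ 2 := by
    funext t
    rw [hsplit, Pi.add_apply, transpose_mul_givens_apply_left hij,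
      transpose_mul_givens_apply_right hij]
    congr 1
    refine Finset.sum_congr rfl fun k hk => ?_
    simp only [Finset.mem_sdiff, Finset.mem_univ, Finset.mem_insert, Finset.mem_singleton,
      true_and, not_or] at hk
    rw [transpose_mul_givens_apply_of_ne hk.1 hk.2]
  rw [hcols]
  exact (IsFourthHarmonic.const _).add (isFourthHarmonic_tensorApply_rotation (hA₁ ℓ) (hA₂ ℓ) _ _)

theorem stmt_11_general {n m : ℕ} (A : Fin m → (Fin n → Fin n → Fin n → ℝ))
    (hsym1 : ∀ ℓ p q r, A ℓ p q r = A ℓ q p r)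
    (hsym2 : ∀ ℓ p q r, A ℓ p q r = A ℓ p r q)
    (f : Matrix (Fin n) (Fin n) ℝ → ℝ)
    (hf : ∀ Q, f Q = ∑ ℓ : Fin m, ∑ j,
      (∑ p, ∑ q, ∑ r, A ℓ p q r * Q p j * Q q j * Q r j) ^ 2)
    (ε : ℝ)
    (Q : Matrix (Fin n) (Fin n) ℝ) (hQ : Q ∈ SOn n) (i j : Fin n) (hij : i < j)
    (hgrad : ε * frobNorm (projGrad f Q) ≤ |frobInner (projGrad f Q) (Q * deltaMat i j)|)
    (θ : ℝ) (hθ : θ ∈ Set.Icc (-(π / 4)) (π / 4))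
    (hmax : ∀ θ' : ℝ, f (Q * givens i j θ') ≤ f (Q * givens i j θ))
    (Q' : Matrix (Fin n) (Fin n) ℝ) (hQ' : Q' = Q * givens i j θ) :
    Real.sqrt 2 * ε / 4 * frobNorm (projGrad f Q) * frobNorm (Q' - Q) ≤ |f Q' - f Q| := by
  have hij : i ≠ j := hij.ne
  have hfd : Differentiable ℝ f := by rw [funext hf]; fun_prop
  have hharm := isFourthHarmonic_comp_mul_givens hsym1 hsym2 (fun Q => hf Q) hij Q
  have hstep := hharm.abs_deriv_mul_abs_sin_half_le hmax (abs_le.2 hθ)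
    (hasDerivAt_comp_mul_givens (hfd Q) hQ.1 hij)
  have hnorm : frobNorm (Q' - Q) = √8 * |sin (θ / 2)| := by
    rw [hQ', ← frobNorm_givens_sub_one hij, ← frobNorm_mul_of_orthogonal hQ.1 (givens i j θ - 1),
      Matrix.mul_sub, Matrix.mul_one]
  have hsqrt : √2 * √8 = 4 := by
    rw [← Real.sqrt_mul zero_le_two, show (2 : ℝ) * 8 = 4 ^ 2 by norm_num,
      Real.sqrt_sq zero_le_four]
  rw [givens_zero hij, Matrix.mul_one] at hstep
  calc √2 * ε / 4 * frobNorm (projGrad f Q) * frobNorm (Q' - Q)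
      = ε * frobNorm (projGrad f Q) * |sin (θ / 2)| := by
        rw [hnorm]; linear_combination ε * frobNorm (projGrad f Q) * |sin (θ / 2)| / 4 * hsqrt
    _ ≤ |frobInner (projGrad f Q) (Q * deltaMat i j)| * |sin (θ / 2)| := by gcongr
    _ ≤ f Q' - f Q := by rw [hQ']; exact hstep
    _ ≤ |f Q' - f Q| := le_abs_self _

theorem stmt_11 {n m : ℕ} (hn : 2 ≤ n) (A : Fin m → (Fin n → Fin n → Fin n → ℝ))
    (hsym1 : ∀ ℓ p q r, A ℓ p q r = A ℓ q p r)
    (hsym2 : ∀ ℓ p q r, A ℓ p q r = A ℓ p r q)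
    (f : Matrix (Fin n) (Fin n) ℝ → ℝ)
    (hf : ∀ Q, f Q = ∑ ℓ : Fin m, ∑ j,
      (∑ p, ∑ q, ∑ r, A ℓ p q r * Q p j * Q q j * Q r j) ^ 2)
    (ε : ℝ) (hε : 0 < ε)
    (Q : Matrix (Fin n) (Fin n) ℝ) (hQ : Q ∈ SOn n) (i j : Fin n) (hij : i < j)
    (hgrad : ε * frobNorm (projGrad f Q) ≤ |frobInner (projGrad f Q) (Q * deltaMat i j)|)
    (θ : ℝ) (hθ : θ ∈ Set.Icc (-(π / 4)) (π / 4))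
    (hmax : ∀ θ' : ℝ, f (Q * givens i j θ') ≤ f (Q * givens i j θ))
    (Q' : Matrix (Fin n) (Fin n) ℝ) (hQ' : Q' = Q * givens i j θ) :
    Real.sqrt 2 * ε / 4 * frobNorm (projGrad f Q) * frobNorm (Q' - Q) ≤ |f Q' - f Q| :=
  stmt_11_general A hsym1 hsym2 f hf ε Q hQ i j hij hgrad θ hθ hmax Q' hQ'
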